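/- If ρ_1 = 1 or ρ_1 = -1, then the planar system (5.1) has no nonconstant polynomial first integral: every F ∈ ℂ[x_1,x_2] with f_1 ∂F/∂x_1 + f_2 ∂F/∂x_2 = 0 is constant. -/

import Mathlib

/-!
In the coordinates `x = s c₁ + t c₂` given by the two Darboux points, (5.1) becomes
`ṡ = -s² + β s t`, `ṫ = -t² + β' s t`, and the trace of the Kovalevskaya matrix at `c₁`,
computed in the basis `c₁, c₂`, is `β' = ρ₁ - 1`. For a first integral `Σ g_{a,b} sᵃ tᵇ`
of the new system, the coefficient of `s^{a+1} tᵇ` gives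
`(β' b - a) g_{a,b} = (b - 1 - β (a + 1)) g_{a+1,b-1}`, so `g_{a,b} = 0` for `a > 0` by
induction on `b` as long as `β'` is not a positive rational, which is the case for
`ρ₁ = ±1`. The coefficient of `t^{b+1}` then gives `b g_{0,b} = 0`.
-/

open MvPolynomial Matrix

section LinearAlgebra

variable {R : Type*} [CommRing R]

theorem Matrix.trace_eq_add_of_charpoly_eq (M : Matrix (Fin 2) (Fin 2) R) {μ ν : R}
    (h : M.charpoly = (Polynomial.X - Polynomial.C μ) * (Polynomial.X - Polynomial.C ν)) :
    M.trace = μ + ν := by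
  rw [trace_eq_neg_charpoly_coeff, h, Fintype.card_fin, show 2 - 1 = 0 + 1 from rfl,
    Polynomial.coeff_mul_X_sub_C]
  simp [add_comm]

theorem Matrix.trace_eq_of_mulVec_basis (b : Module.Basis (Fin 2) R (Fin 2 → R))
    (J : Matrix (Fin 2) (Fin 2) R) {μ β β' : R} (h₀ : J *ᵥ b 0 = μ • b 0)
    (h₁ : J *ᵥ b 1 = β • b 0 + β' • b 1) : J.trace = μ + β' := by
  rw [← Matrix.trace_toLin'_eq, LinearMap.trace_eq_matrix_trace R b, Matrix.trace_fin_two,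
    LinearMap.toMatrix_apply, LinearMap.toMatrix_apply, Matrix.toLin'_apply, Matrix.toLin'_apply,
    h₀, h₁]
  simp

end LinearAlgebra

namespace MvPolynomial

variable {R σ τ ι : Type*} [CommRing R]

noncomputable def vectorField [Fintype σ] (f : σ → MvPolynomial σ R) :
    Derivation R (MvPolynomial σ R) (MvPolynomial σ R) :=
  ∑ i, f i • pderiv i

theorem vectorField_apply [Fintype σ] (f : σ → MvPolynomial σ R) (p : MvPolynomial σ R) :
    vectorField f p = ∑ i, f i * pderiv i p := by
  rw [vectorField, ← Derivation.coeFnAddMonoidHom_apply, map_sum]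
  simp

theorem vectorField_X [Fintype σ] (f : σ → MvPolynomial σ R) (i : σ) :
    vectorField f (X i) = f i := by
  classical
  simp [vectorField_apply, pderiv_X, Pi.single_apply]

theorem derivation_bind₁_eq (D : Derivation R (MvPolynomial τ R) (MvPolynomial τ R))
    (D' : Derivation R (MvPolynomial σ R) (MvPolynomial σ R)) (g : σ → MvPolynomial τ R)
    (h : ∀ i, D (g i) = bind₁ g (D' (X i))) (p : MvPolynomial σ R) :
    D (bind₁ g p) = bind₁ g (D' p) := by
  induction p using MvPolynomial.induction_on with
  | C a => simp [derivation_C]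
  | add p q hp hq => simp [hp, hq]
  | mul_X p i hp =>
    simp only [map_mul, map_add, bind₁_X_right, Derivation.leibniz, smul_eq_mul, hp, h]

noncomputable def linearSubst [Fintype ι] (v : ι → σ → R) (j : σ) : MvPolynomial ι R :=
  ∑ k, C (v k j) * X k

theorem pderiv_linearSubst [Fintype ι] (v : ι → σ → R) (i : ι) (j : σ) :
    pderiv i (linearSubst v j) = C (v i j) := by
  classical
  simp [linearSubst, pderiv_X, Pi.single_apply]

theorem eval_bind₁_linearSubst [Fintype ι] (v : ι → σ → R) (y : ι → R)
    (p : MvPolynomial σ R) :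
    eval y (bind₁ (linearSubst v) p) = eval (∑ k, y k • v k) p := by
  have hy : (fun j => eval y (linearSubst v j)) = ∑ k, y k • v k := by
    ext j
    simp [linearSubst, mul_comm]
  rw [← hy]
  exact eval₂Hom_bind₁ _ _ _ _

theorem coeff_X_mul_pderiv (d : σ →₀ ℕ) (i : σ) (p : MvPolynomial σ R) :
    coeff d (X i * pderiv i p) = d i * coeff d p := by
  classical
  induction p using MvPolynomial.induction_on' with
  | monomial m r =>
    rw [X_mul_pderiv_monomial, coeff_smul, coeff_monomial]
    split_ifs with h
    · simp [h]
    · simp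
  | add p q hp hq => simp [mul_add, hp, hq]

section NormalForm

noncomputable def normalField (β β' : R) : Fin 2 → MvPolynomial (Fin 2) R :=
  ![-X 0 ^ 2 + C β * X 0 * X 1, -X 1 ^ 2 + C β' * X 0 * X 1]

theorem vectorField_normalField (β β' : R) (G : MvPolynomial (Fin 2) R) :
    vectorField (normalField β β') G =
      X 0 * (C β' * (X 1 * pderiv 1 G) - X 0 * pderiv 0 G) +
        X 1 * (C β * (X 0 * pderiv 0 G) - X 1 * pderiv 1 G) := by
  rw [vectorField_apply, Fin.sum_univ_two]
  simp only [normalField, Matrix.cons_val_zero, Matrix.cons_val_one]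
  ring

local notation "mon" a:max b:max => Finsupp.single (0 : Fin 2) a + Finsupp.single (1 : Fin 2) b

theorem coeff_X_zero_mul_mon_succ (a b : ℕ) (P : MvPolynomial (Fin 2) R) :
    coeff (mon (a + 1) b) (X 0 * P) = coeff (mon a b) P := by
  rw [show mon (a + 1) b = Finsupp.single 0 1 + mon a b by rw [Finsupp.single_add]; abel,
    coeff_X_mul]

theorem coeff_X_one_mul_mon_succ (a b : ℕ) (P : MvPolynomial (Fin 2) R) :
    coeff (mon a (b + 1)) (X 1 * P) = coeff (mon a b) P := by
  rw [show mon a (b + 1) = Finsupp.single 1 1 + mon a b by rw [Finsupp.single_add]; abel,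
    coeff_X_mul]

theorem coeff_X_zero_mul_mon_zero (b : ℕ) (P : MvPolynomial (Fin 2) R) :
    coeff (mon 0 b) (X 0 * P) = 0 := by
  rw [coeff_X_mul']
  simp

theorem coeff_X_one_mul_mon_zero (a : ℕ) (P : MvPolynomial (Fin 2) R) :
    coeff (mon a 0) (X 1 * P) = 0 := by
  rw [coeff_X_mul']
  simp

theorem coeff_normalField_succ_succ (β β' : R) (G : MvPolynomial (Fin 2) R) (a b : ℕ) :
    coeff (mon (a + 1) (b + 1)) (vectorField (normalField β β') G) =
      (β' * (b + 1) - a) * coeff (mon a (b + 1)) G +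
        (β * (a + 1) - b) * coeff (mon (a + 1) b) G := by
  rw [vectorField_normalField, coeff_add, coeff_X_zero_mul_mon_succ, coeff_X_one_mul_mon_succ]
  simp only [coeff_sub, coeff_C_mul, coeff_X_mul_pderiv, Finsupp.coe_add, Pi.add_apply,
    Finsupp.single_eq_same, Finsupp.single_eq_of_ne zero_ne_one,
    Finsupp.single_eq_of_ne one_ne_zero]
  push_cast
  ring

theorem coeff_normalField_succ_zero (β β' : R) (G : MvPolynomial (Fin 2) R) (a : ℕ) :
    coeff (mon (a + 1) 0) (vectorField (normalField β β') G) = -a * coeff (mon a 0) G := by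
  rw [vectorField_normalField, coeff_add, coeff_X_zero_mul_mon_succ, coeff_X_one_mul_mon_zero]
  simp [coeff_X_mul_pderiv, coeff_C_mul]

theorem coeff_normalField_zero_succ (β β' : R) (G : MvPolynomial (Fin 2) R) (b : ℕ) :
    coeff (mon 0 (b + 1)) (vectorField (normalField β β') G) = -b * coeff (mon 0 b) G := by
  rw [vectorField_normalField, coeff_add, coeff_X_zero_mul_mon_zero, coeff_X_one_mul_mon_succ]
  simp [coeff_X_mul_pderiv, coeff_C_mul]

variable {K : Type*} [Field K] [CharZero K]

theorem eq_C_of_vectorField_normalField_eq_zero (β β' : K)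
    (hβ' : ∀ a b : ℕ, 0 < a → β' * b ≠ a) {G : MvPolynomial (Fin 2) K}
    (hG : vectorField (normalField β β') G = 0) :
    G = C (coeff 0 G) := by
  have hpos : ∀ b a, 0 < a → coeff (mon a b) G = 0 := by
    intro b
    induction b with
    | zero =>
      intro a ha
      have h := coeff_normalField_succ_zero β β' G a
      rw [hG, coeff_zero] at h
      exact (mul_eq_zero.mp h.symm).resolve_left (neg_ne_zero.mpr (Nat.cast_ne_zero.mpr ha.ne'))
    | succ b ih =>
      intro a ha
      have h := coeff_normalField_succ_succ β β' G a b
      rw [hG, coeff_zero, ih (a + 1) a.succ_pos, mul_zero, add_zero, eq_comm] at h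
      refine (mul_eq_zero.mp h).resolve_left (sub_ne_zero.mpr ?_)
      exact_mod_cast hβ' a (b + 1) ha
  have hzero : ∀ b, 0 < b → coeff (mon 0 b) G = 0 := by
    intro b hb
    have h := coeff_normalField_zero_succ β β' G b
    rw [hG, coeff_zero] at h
    exact (mul_eq_zero.mp h.symm).resolve_left (neg_ne_zero.mpr (Nat.cast_ne_zero.mpr hb.ne'))
  ext d
  obtain ⟨a, b, rfl⟩ : ∃ a b, d = mon a b := ⟨d 0, d 1, by ext i; fin_cases i <;> simp⟩
  rw [coeff_C]
  split_ifs with h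
  · rw [h]
  rcases Nat.eq_zero_or_pos a with rfl | ha
  · exact hzero b (Nat.pos_of_ne_zero fun hb => h (by simp [hb]))
  · exact hpos b a ha

end NormalForm

section QuadraticField

noncomputable def jacobian (f : σ → MvPolynomial σ R) (u : σ → R) : Matrix σ σ R :=
  Matrix.of fun i j => eval u (pderiv j (f i))

def IsDarbouxPoint (f : σ → MvPolynomial σ R) (c : σ → R) : Prop :=
  ∀ i, eval c (f i) + c i = 0

noncomputable def quadraticField (a₁ b₁ d₂ a₂ b₂ d₁ : R) :
    Fin 2 → MvPolynomial (Fin 2) R :=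
  ![C a₁ * X 0 ^ 2 + C b₁ * X 0 * X 1 + C d₂ * X 1 ^ 2,
    C a₂ * X 1 ^ 2 + C b₂ * X 0 * X 1 + C d₁ * X 0 ^ 2]

variable (a₁ b₁ d₂ a₂ b₂ d₁ : R)

theorem jacobian_quadraticField (u : Fin 2 → R) :
    jacobian (quadraticField a₁ b₁ d₂ a₂ b₂ d₁) u =
      !![2 * a₁ * u 0 + b₁ * u 1, b₁ * u 0 + 2 * d₂ * u 1;
        2 * d₁ * u 0 + b₂ * u 1, b₂ * u 0 + 2 * a₂ * u 1] := by
  ext i j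
  fin_cases i <;> fin_cases j <;>
    simp [quadraticField, jacobian, pderiv_X, mul_assoc, mul_comm, mul_left_comm, add_comm]

@[simp]
theorem eval_quadraticField_zero (u : Fin 2 → R) :
    eval u (quadraticField a₁ b₁ d₂ a₂ b₂ d₁ 0) =
      a₁ * u 0 ^ 2 + b₁ * u 0 * u 1 + d₂ * u 1 ^ 2 := by
  simp [quadraticField]

@[simp]
theorem eval_quadraticField_one (u : Fin 2 → R) :
    eval u (quadraticField a₁ b₁ d₂ a₂ b₂ d₁ 1) =
      a₂ * u 1 ^ 2 + b₂ * u 0 * u 1 + d₁ * u 0 ^ 2 := by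
  simp [quadraticField]

theorem eval_smul_add_smul_quadraticField (s t : R) (u w : Fin 2 → R) (j : Fin 2) :
    eval (s • u + t • w) (quadraticField a₁ b₁ d₂ a₂ b₂ d₁ j) =
      s ^ 2 * eval u (quadraticField a₁ b₁ d₂ a₂ b₂ d₁ j) +
        s * t * (jacobian (quadraticField a₁ b₁ d₂ a₂ b₂ d₁) u *ᵥ w) j +
          t ^ 2 * eval w (quadraticField a₁ b₁ d₂ a₂ b₂ d₁ j) := by
  rw [jacobian_quadraticField, mulVec_fin_two]
  fin_cases j <;>
  simp only [Fin.zero_eta, Fin.mk_one, eval_quadraticField_zero, eval_quadraticField_one,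
    Pi.add_apply, Pi.smul_apply, smul_eq_mul, cons_val_zero, cons_val_one, of_apply, cons_val',
    cons_val_fin_one] <;>
  ring

theorem jacobian_quadraticField_mulVec_of_isDarbouxPoint {c : Fin 2 → R}
    (hc : IsDarbouxPoint (quadraticField a₁ b₁ d₂ a₂ b₂ d₁) c) :
    jacobian (quadraticField a₁ b₁ d₂ a₂ b₂ d₁) c *ᵥ c = (-2 : R) • c := by
  have hc₀ := hc 0
  have hc₁ := hc 1
  rw [eval_quadraticField_zero] at hc₀
  rw [eval_quadraticField_one] at hc₁
  rw [jacobian_quadraticField, mulVec_fin_two]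
  ext j
  fin_cases j
  · show (2 * a₁ * c 0 + b₁ * c 1) * c 0 + (b₁ * c 0 + 2 * d₂ * c 1) * c 1 = -2 * c 0
    linear_combination 2 * hc₀
  · show (2 * d₁ * c 0 + b₂ * c 1) * c 0 + (b₂ * c 0 + 2 * a₂ * c 1) * c 1 = -2 * c 1
    linear_combination 2 * hc₁

theorem vectorField_normalField_linearSubst {K : Type*} [CommRing K] [IsDomain K] [Infinite K]
    {a₁ b₁ d₂ a₂ b₂ d₁ β β' : K} {v : Fin 2 → Fin 2 → K}
    (hv₀ : IsDarbouxPoint (quadraticField a₁ b₁ d₂ a₂ b₂ d₁) (v 0))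
    (hv₁ : IsDarbouxPoint (quadraticField a₁ b₁ d₂ a₂ b₂ d₁) (v 1))
    (hB : jacobian (quadraticField a₁ b₁ d₂ a₂ b₂ d₁) (v 0) *ᵥ v 1 = β • v 0 + β' • v 1)
    (j : Fin 2) :
    vectorField (normalField β β') (linearSubst v j) =
      bind₁ (linearSubst v) (quadraticField a₁ b₁ d₂ a₂ b₂ d₁ j) := by
  apply MvPolynomial.funext
  intro y
  have hBj := congrFun hB j
  rw [eval_bind₁_linearSubst, Fin.sum_univ_two, eval_smul_add_smul_quadraticField,
    vectorField_apply, Fin.sum_univ_two]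
  simp only [pderiv_linearSubst, normalField, map_add, map_mul, map_neg, map_pow, eval_X, eval_C,
    Matrix.cons_val_zero, Matrix.cons_val_one, Pi.add_apply, Pi.smul_apply, smul_eq_mul] at hBj ⊢
  linear_combination (-y 0 ^ 2) * hv₀ j - y 1 ^ 2 * hv₁ j - y 0 * y 1 * hBj

end QuadraticField

theorem eq_C_of_bind₁_linearSubst_eq_C {K ι : Type*} [CommRing K] [IsDomain K] [Infinite K]
    [Fintype ι] (b : Module.Basis ι K (σ → K)) {F : MvPolynomial σ K} {k : K}
    (h : bind₁ (linearSubst b) F = C k) : F = C k :=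
  MvPolynomial.funext fun x => by
    rw [← b.sum_repr x, ← eval_bind₁_linearSubst, h, eval_C, eval_C]

theorem exists_eq_C_of_vectorField_quadraticField_eq_zero {K : Type*} [Field K] [CharZero K]
    {a₁ b₁ d₂ a₂ b₂ d₁ ρ : K} {c₁ c₂ : Fin 2 → K}
    (hc₁ : IsDarbouxPoint (quadraticField a₁ b₁ d₂ a₂ b₂ d₁) c₁)
    (hc₂ : IsDarbouxPoint (quadraticField a₁ b₁ d₂ a₂ b₂ d₁) c₂)
    (hind : LinearIndependent K ![c₁, c₂])
    (hK : (jacobian (quadraticField a₁ b₁ d₂ a₂ b₂ d₁) c₁ + 1).charpoly =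
      (Polynomial.X + Polynomial.C 1) * (Polynomial.X - Polynomial.C ρ))
    (hρ : ∀ a b : ℕ, 0 < a → (ρ - 1) * b ≠ a) {F : MvPolynomial (Fin 2) K}
    (hF : vectorField (quadraticField a₁ b₁ d₂ a₂ b₂ d₁) F = 0) :
    ∃ k, F = C k := by
  obtain ⟨b, rfl, rfl⟩ :
      ∃ b : Module.Basis (Fin 2) K (Fin 2 → K), b 0 = c₁ ∧ b 1 = c₂ :=
    ⟨basisOfLinearIndependentOfCardEqFinrank hind (by simp), by simp, by simp⟩
  set J := jacobian (quadraticField a₁ b₁ d₂ a₂ b₂ d₁) (b 0)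
  obtain ⟨β, β', hB⟩ : ∃ β β' : K, J *ᵥ b 1 = β • b 0 + β' • b 1 :=
    ⟨_, _, (b.sum_repr (J *ᵥ b 1)).symm.trans (Fin.sum_univ_two _)⟩
  have hβ' : β' = ρ - 1 := by
    have htrace := (J + 1).trace_eq_add_of_charpoly_eq (μ := -1) (ν := ρ)
      (by rw [hK, map_neg, sub_neg_eq_add])
    rw [Matrix.trace_add, Matrix.trace_eq_of_mulVec_basis b J
      (jacobian_quadraticField_mulVec_of_isDarbouxPoint _ _ _ _ _ _ hc₁) hB, Matrix.trace_one,
      Fintype.card_fin] at htrace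
    linear_combination htrace
  have hG := derivation_bind₁_eq (vectorField (normalField β β'))
    (vectorField (quadraticField a₁ b₁ d₂ a₂ b₂ d₁)) (linearSubst b)
    (fun j => by rw [vectorField_X]; exact vectorField_normalField_linearSubst hc₁ hc₂ hB j) F
  rw [hF, map_zero] at hG
  exact ⟨_, eq_C_of_bind₁_linearSubst_eq_C b
    (eq_C_of_vectorField_normalField_eq_zero β β' (hβ' ▸ hρ) hG)⟩

end MvPolynomial

theorem planar_no_first_integral_of_rho_pm_one_general
    (a₁ b₁ d₂ a₂ b₂ d₁ : ℂ)
    (f : Fin 2 → MvPolynomial (Fin 2) ℂ)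
    (hf0 : f 0 = C a₁ * X 0 ^ 2 + C b₁ * X 0 * X 1 + C d₂ * X 1 ^ 2)
    (hf1 : f 1 = C a₂ * X 1 ^ 2 + C b₂ * X 0 * X 1 + C d₁ * X 0 ^ 2)
    (c₁ c₂ : Fin 2 → ℂ)
    (hc₁ : ∀ i, eval c₁ (f i) + c₁ i = 0)
    (hc₂ : ∀ i, eval c₂ (f i) + c₂ i = 0)
    (hind : LinearIndependent ℂ ![c₁, c₂])
    (ρ₁ : ℂ)
    (hK₁ : (Matrix.of fun i j : Fin 2 => eval c₁ (pderiv j (f i)) + if i = j then (1 : ℂ) else 0).charpoly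
        = (Polynomial.X + Polynomial.C 1) * (Polynomial.X - Polynomial.C ρ₁))
    (hρ : ρ₁ = 1 ∨ ρ₁ = -1) :
    ∀ F : MvPolynomial (Fin 2) ℂ,
      f 0 * pderiv 0 F + f 1 * pderiv 1 F = 0 → ∃ k : ℂ, F = C k := by
  intro F hF
  obtain rfl : f = quadraticField a₁ b₁ d₂ a₂ b₂ d₁ := by
    ext1 i
    fin_cases i
    exacts [hf0, hf1]
  have hρ' : ∀ a b : ℕ, 0 < a → (ρ₁ - 1) * b ≠ a := by
    rintro a b ha h
    rcases hρ with rfl | rfl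
    · rw [sub_self, zero_mul, eq_comm, Nat.cast_eq_zero] at h
      omega
    · have h' : ((a + 2 * b : ℕ) : ℂ) = 0 := by push_cast; linear_combination -h
      rw [Nat.cast_eq_zero] at h'
      omega
  exact exists_eq_C_of_vectorField_quadraticField_eq_zero hc₁ hc₂ hind hK₁ hρ'
    (by rwa [vectorField_apply, Fin.sum_univ_two])

/-- If `ρ₁ = 1` or `ρ₁ = -1`, the planar quadratic system (5.1) has no
nonconstant polynomial first integral. -/
theorem planar_no_first_integral_of_rho_pm_one
    (a₁ b₁ d₂ a₂ b₂ d₁ : ℂ)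
    (f : Fin 2 → MvPolynomial (Fin 2) ℂ)
    (hf0 : f 0 = C a₁ * X 0 ^ 2 + C b₁ * X 0 * X 1 + C d₂ * X 1 ^ 2)
    (hf1 : f 1 = C a₂ * X 1 ^ 2 + C b₂ * X 0 * X 1 + C d₁ * X 0 ^ 2)
    (c₁ c₂ : Fin 2 → ℂ)
    (hc₁ : ∀ i, eval c₁ (f i) + c₁ i = 0)
    (hc₂ : ∀ i, eval c₂ (f i) + c₂ i = 0)
    (hind : LinearIndependent ℂ ![c₁, c₂])
    (ρ₁ ρ₂ : ℂ)
    (hK₁ : (Matrix.of fun i j : Fin 2 => eval c₁ (pderiv j (f i)) + if i = j then (1 : ℂ) else 0).charpoly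
        = (Polynomial.X + Polynomial.C 1) * (Polynomial.X - Polynomial.C ρ₁))
    (hK₂ : (Matrix.of fun i j : Fin 2 => eval c₂ (pderiv j (f i)) + if i = j then (1 : ℂ) else 0).charpoly
        = (Polynomial.X + Polynomial.C 1) * (Polynomial.X - Polynomial.C ρ₂))
    (hρ : ρ₁ = 1 ∨ ρ₁ = -1) :
    ∀ F : MvPolynomial (Fin 2) ℂ,
      f 0 * pderiv 0 F + f 1 * pderiv 1 F = 0 → ∃ k : ℂ, F = C k :=
  planar_no_first_integral_of_rho_pm_one_general a₁ b₁ d₂ a₂ b₂ d₁ f hf0 hf1 c₁ c₂ hc₁ hc₂ hind ρ₁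
    hK₁ hρ
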